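/- Let u₁,…,u_{2n} ∈ ℝ^m be vectors such that the sum over j = 1,…,n of the wedge products u_j ∧ u_{j+n} equals zero (i.e., for all 1 ≤ k < l ≤ m, the sum over j of (u_j^k u_{j+n}^l − u_j^l u_{j+n}^k) vanishes). Then the 2n × m matrix B whose rows are u₁,…,u_{2n} has rank at most n. -/

import Mathlib

/-!
With `J` the standard symplectic matrix on `ℝ^{2n}`, the wedge condition says exactly
`Bᵀ J B = 0`: the column space of `B` is isotropic for the symplectic form. Then
`Bᵀ * (J B) = 0` gives `rank Bᵀ + rank (J B) ≤ 2n` by rank–nullity, and both ranks equal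
`rank B` because `J` is invertible.
-/

open Matrix

namespace Matrix

variable {ι κ : Type*} [Fintype ι] [DecidableEq ι]

section CommRing

variable {R : Type*} [CommRing R] (B : Matrix (ι ⊕ ι) κ R)

theorem J_mul_apply_inl (j : ι) (l : κ) : (J ι R * B) (Sum.inl j) l = -B (Sum.inr j) l := by
  simp [J, mul_apply, Fintype.sum_sum_type, one_apply]

theorem J_mul_apply_inr (j : ι) (l : κ) : (J ι R * B) (Sum.inr j) l = B (Sum.inl j) l := by
  simp [J, mul_apply, Fintype.sum_sum_type, one_apply]

theorem transpose_mul_J_mul_apply (k l : κ) :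
    (Bᵀ * J ι R * B) k l =
      -∑ j, (B (Sum.inl j) k * B (Sum.inr j) l - B (Sum.inl j) l * B (Sum.inr j) k) := by
  rw [Matrix.mul_assoc, mul_apply, Fintype.sum_sum_type, ← Finset.sum_add_distrib,
    ← Finset.sum_neg_distrib]
  refine Finset.sum_congr rfl fun j _ => ?_
  rw [transpose_apply, transpose_apply, J_mul_apply_inl, J_mul_apply_inr]
  ring

end CommRing

theorem rank_le_card_of_transpose_mul_J_mul_eq_zero {K : Type*} [Field K] [Fintype κ]
    (B : Matrix (ι ⊕ ι) κ K) (hB : Bᵀ * J ι K * B = 0) : B.rank ≤ Fintype.card ι := by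
  have h := rank_add_rank_le_card_of_mul_eq_zero (A := Bᵀ) (B := J ι K * B)
    (by rw [← Matrix.mul_assoc, hB])
  rw [rank_transpose, rank_mul_eq_right_of_isUnit_det _ _ (isUnit_det_J ι K),
    Fintype.card_sum] at h
  omega

end Matrix

/-- If `u₁, …, u_{2n} ∈ ℝ^m` (the rows of `B`, indexed here by `Fin n ⊕ Fin n`,
with `Sum.inl j` corresponding to `u_j` and `Sum.inr j` to `u_{j+n}`) satisfy
`∑_{j=1}^n u_j ∧ u_{j+n} = 0`, i.e. for all `k < l` the sum of
`u_j^k u_{j+n}^l − u_j^l u_{j+n}^k` vanishes, then the matrix `B` has rank at most `n`. -/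
theorem low_rank_of_wedge_sum_zero (n m : ℕ) (B : Matrix (Fin n ⊕ Fin n) (Fin m) ℝ)
    (h : ∀ k l : Fin m, k < l →
      ∑ j : Fin n,
        (B (Sum.inl j) k * B (Sum.inr j) l - B (Sum.inl j) l * B (Sum.inr j) k) = 0) :
    B.rank ≤ n := by
  have hiso : Bᵀ * J (Fin n) ℝ * B = 0 := by
    ext k l
    rw [transpose_mul_J_mul_apply, Matrix.zero_apply, neg_eq_zero]
    rcases lt_trichotomy k l with hkl | rfl | hlk
    · exact h k l hkl
    · simp
    · rw [← neg_eq_zero, ← Finset.sum_neg_distrib]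
      simpa only [neg_sub] using h l k hlk
  simpa using rank_le_card_of_transpose_mul_J_mul_eq_zero B hiso
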